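/- Let k be a field and N ≥ 1. Order ℕ^N by the reversed lexicographic order: a < b if and only if at the largest index where a and b differ, the entry of a is smaller. Fix λ ∈ ℤ^N with λ_j ≥ 1 for all j. Let A be a commutative k-algebra which is free as a k-module with basis (b_m)_{m ∈ ℕ^N}, with b_0 = 1, such that for all m, n ∈ ℕ^N the element b_m·b_n − b_{m+n} lies in the k-linear span of { b_p : p < m+n and ⟨λ, p⟩ = ⟨λ, m+n⟩ }. For nonzero x ∈ A let Ψ(x) ∈ ℕ^N be the largest m whose coefficient in x is nonzero, and for n ∈ ℕ let A_n be the k-span of { b_m : ⟨λ, m⟩ = n }. Then the Newton–Okounkov body Δ(A), defined as the closure in ℝ^N of the convex hull of ⋃_{n≥1} { (1/n)·Ψ(x) : x ∈ A_n, x ≠ 0 }, equals the convex hull of the finite set { (1/λ_j)·e_j : 1 ≤ j ≤ N }, where (e_j) is the standard basis of ℝ^N. -/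

import Mathlib

/-- The (strict) reversed lexicographic order on `ℕ^N`: `a < b` iff at the largest index
where `a` and `b` differ, the entry of `a` is smaller than that of `b`. -/
def RevLex {N : ℕ} (a b : Fin N → ℕ) : Prop :=
  ∃ i : Fin N, a i < b i ∧ ∀ j : Fin N, i < j → a j = b j

/-!
Every nonzero `x ∈ Aₙ` has its leading exponent `Ψ x` on the hyperplane `⟨λ, m⟩ = n`, so the
point `Ψ x / n` is a convex combination of the vertices `eⱼ / λⱼ` with weights `λⱼ (Ψ x)ⱼ / n`.
Conversely the vertex `eⱼ / λⱼ` is attained by `x = B eⱼ ∈ A_{λⱼ}`. Hence the generating set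
lies between the finite vertex set and its convex hull, which is closed.
-/

theorem closure_convexHull_eq_of_subset_of_subset_convexHull {E : Type*} [AddCommGroup E]
    [Module ℝ E] [TopologicalSpace E] [IsTopologicalAddGroup E] [ContinuousSMul ℝ E] [T2Space E]
    {s t : Set E} (ht : t.Finite) (hts : t ⊆ s) (hst : s ⊆ convexHull ℝ t) :
    closure (convexHull ℝ s) = convexHull ℝ t := by
  refine subset_antisymm ?_ ?_
  · exact closure_minimal (convexHull_min hst (convex_convexHull ℝ t))
      (ht.isClosed_convexHull ℝ)
  · exact (convexHull_mono hts).trans subset_closure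

theorem mem_convexHull_inv_smul_single {ι : Type*} [Fintype ι] [DecidableEq ι]
    {w y : ι → ℝ} (hw : ∀ j, 0 < w j) (hy : 0 ≤ y) (hwy : ∑ j, w j * y j = 1) :
    y ∈ convexHull ℝ (Set.range fun j => (w j)⁻¹ • (Pi.single j 1 : ι → ℝ)) := by
  have hcomb : ∑ j, (w j * y j) • (w j)⁻¹ • (Pi.single j 1 : ι → ℝ) = y := by
    conv_rhs => rw [← Finset.univ_sum_single y]
    refine Finset.sum_congr rfl fun j _ => ?_
    rw [smul_smul, mul_comm (w j), mul_inv_cancel_right₀ (hw j).ne', ← Pi.single_smul, smul_eq_mul,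
      mul_one]
  rw [← hcomb]
  exact (convex_convexHull ℝ _).sum_mem (fun j _ => mul_nonneg (hw j).le (hy j)) hwy
    (fun j _ => subset_convexHull ℝ _ ⟨j, rfl⟩)

theorem Module.Basis.eq_of_repr_self_apply_ne_zero {ι R M : Type*} [Semiring R]
    [AddCommMonoid M] [Module R M] (b : Module.Basis ι R M) {i j : ι}
    (h : b.repr (b i) j ≠ 0) : j = i := by
  rw [b.repr_self] at h
  exact (Finsupp.single_apply_ne_zero.1 h).1

theorem Module.Basis.of_repr_apply_ne_zero_of_mem_span {ι R M : Type*} [Semiring R]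
    [AddCommMonoid M] [Module R M] (b : Module.Basis ι R M) {P : ι → Prop} {x : M}
    (hx : x ∈ Submodule.span R {z | ∃ i, P i ∧ z = b i}) {i : ι} (hi : b.repr x i ≠ 0) : P i := by
  have hgen : {z | ∃ i, P i ∧ z = b i} = b '' {i | P i} := by
    ext z; simp [eq_comm]
  exact b.mem_span_image.1 (hgen ▸ hx) (Finsupp.mem_support_iff.2 hi)

section NewtonOkounkov

variable {k A : Type*} [Field k] [CommRing A] [Algebra k A] {N : ℕ} {lam : Fin N → ℤ}
  {B : Module.Basis (Fin N → ℕ) k A} {Ψ : A → (Fin N → ℕ)}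

variable (lam B Ψ) in
/-- `Δ(A)` is the closure of the convex hull of this set. -/
def newtonOkounkovGenerators : Set (Fin N → ℝ) :=
  ⋃ n : ℕ, ⋃ (_ : 1 ≤ n),
    {y : Fin N → ℝ | ∃ x : A,
      x ∈ Submodule.span k
        {z : A | ∃ m : Fin N → ℕ, (∑ j : Fin N, lam j * (m j : ℤ)) = (n : ℤ) ∧ z = B m} ∧
      x ≠ 0 ∧ y = (n : ℝ)⁻¹ • fun i : Fin N => (Ψ x i : ℝ)}

theorem inv_smul_single_mem_newtonOkounkovGenerators (hΨ : ∀ x : A, x ≠ 0 → B.repr x (Ψ x) ≠ 0)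
    {j : Fin N} (hlam : 1 ≤ lam j) :
    ((lam j : ℝ))⁻¹ • (Pi.single j 1 : Fin N → ℝ) ∈ newtonOkounkovGenerators lam B Ψ := by
  obtain ⟨n, hn⟩ := Int.eq_ofNat_of_zero_le (by linarith : 0 ≤ lam j)
  have hΨB : Ψ (B (Pi.single j 1)) = Pi.single j 1 :=
    B.eq_of_repr_self_apply_ne_zero (hΨ _ (B.ne_zero _))
  have hweight : ∑ i, lam i * ((Pi.single j 1 : Fin N → ℕ) i : ℤ) = n := by
    simp [Pi.single_apply, hn]
  have hcast : (fun i => ((Pi.single j 1 : Fin N → ℕ) i : ℝ)) = Pi.single j 1 := by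
    ext i; by_cases h : i = j <;> simp [h]
  simp only [newtonOkounkovGenerators, Set.mem_iUnion]
  refine ⟨n, by omega, B (Pi.single j 1), Submodule.subset_span ⟨_, hweight, rfl⟩, B.ne_zero _, ?_⟩
  rw [hΨB, hcast, hn, Int.cast_natCast]

theorem newtonOkounkovGenerators_subset_convexHull (hΨ : ∀ x : A, x ≠ 0 → B.repr x (Ψ x) ≠ 0)
    (hlam : ∀ j, 1 ≤ lam j) :
    newtonOkounkovGenerators lam B Ψ ⊆
      convexHull ℝ (Set.range fun j => ((lam j : ℝ))⁻¹ • (Pi.single j 1 : Fin N → ℝ)) := by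
  simp only [newtonOkounkovGenerators, Set.iUnion_subset_iff]
  rintro n hn _ ⟨x, hx, hx0, rfl⟩
  have hlead : ∑ j, lam j * (Ψ x j : ℤ) = n :=
    B.of_repr_apply_ne_zero_of_mem_span (P := fun m => ∑ j, lam j * (m j : ℤ) = n) hx (hΨ x hx0)
  have hn_pos : (0 : ℝ) < n := by exact_mod_cast hn
  refine mem_convexHull_inv_smul_single (fun j => by exact_mod_cast hlam j)
    (fun i => by simp only [Pi.zero_apply, Pi.smul_apply, smul_eq_mul]; positivity) ?_
  calc ∑ j, (lam j : ℝ) * ((n : ℝ)⁻¹ • fun i => (Ψ x i : ℝ)) j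
      = (n : ℝ)⁻¹ * ((∑ j, lam j * (Ψ x j : ℤ) : ℤ) : ℝ) := by
        push_cast
        rw [Finset.mul_sum]
        exact Finset.sum_congr rfl fun j _ => by simp only [Pi.smul_apply, smul_eq_mul]; ring
    _ = 1 := by rw [hlead, Int.cast_natCast, inv_mul_cancel₀ hn_pos.ne']

end NewtonOkounkov

theorem stmt15_general {k : Type*} [Field k] {N : ℕ}
    {A : Type*} [CommRing A] [Algebra k A]
    (lam : Fin N → ℤ) (hlam : ∀ j, 1 ≤ lam j)
    (B : Module.Basis (Fin N → ℕ) k A)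
    (Ψ : A → (Fin N → ℕ))
    (hΨ : ∀ x : A, x ≠ 0 →
      B.repr x (Ψ x) ≠ 0 ∧ ∀ m : Fin N → ℕ, B.repr x m ≠ 0 → m = Ψ x ∨ RevLex m (Ψ x)) :
    closure (convexHull ℝ (⋃ n : ℕ, ⋃ (_ : 1 ≤ n),
      {y : Fin N → ℝ | ∃ x : A,
        x ∈ Submodule.span k
          {z : A | ∃ m : Fin N → ℕ, (∑ j : Fin N, lam j * (m j : ℤ)) = (n : ℤ) ∧ z = B m} ∧
        x ≠ 0 ∧ y = (n : ℝ)⁻¹ • fun i : Fin N => (Ψ x i : ℝ)})) =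
    convexHull ℝ
      {y : Fin N → ℝ | ∃ j : Fin N, y = ((lam j : ℝ))⁻¹ • (Pi.single j (1 : ℝ) : Fin N → ℝ)} := by
  have hΨ' : ∀ x : A, x ≠ 0 → B.repr x (Ψ x) ≠ 0 := fun x hx => (hΨ x hx).1
  have hV : {y : Fin N → ℝ | ∃ j : Fin N, y = ((lam j : ℝ))⁻¹ • (Pi.single j (1 : ℝ))} =
      Set.range fun j => ((lam j : ℝ))⁻¹ • (Pi.single j (1 : ℝ) : Fin N → ℝ) :=
    Set.ext fun _ => exists_congr fun _ => eq_comm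
  rw [hV]
  exact closure_convexHull_eq_of_subset_of_subset_convexHull (Set.finite_range _)
    (Set.range_subset_iff.2 fun j => inv_smul_single_mem_newtonOkounkovGenerators hΨ' (hlam j))
    (newtonOkounkovGenerators_subset_convexHull hΨ' hlam)

/-- let `A` be a commutative `k`-algebra, free as a `k`-module with basis
`(B m)_{m ∈ ℕ^N}`, `B 0 = 1`, such that `B m · B n − B (m+n)` lies in the span of the `B p`
with `p < m+n` (reversed lex) and `⟨λ, p⟩ = ⟨λ, m+n⟩`, where `λ ∈ ℤ^N` has entries `≥ 1`.
With `Ψ x` the largest basis index appearing in `x`, and `Aₙ` the span of the `B m` with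
`⟨λ, m⟩ = n`, the Newton–Okounkov body
`Δ(A) = closure (convexHull (⋃_{n≥1} {(1/n)·Ψ(x) : x ∈ Aₙ ∖ {0}}))` equals the convex hull
of the points `(1/λⱼ)·eⱼ`. -/
theorem stmt15 {k : Type*} [Field k] {N : ℕ} (hN : 1 ≤ N)
    {A : Type*} [CommRing A] [Algebra k A]
    (lam : Fin N → ℤ) (hlam : ∀ j, 1 ≤ lam j)
    (B : Module.Basis (Fin N → ℕ) k A) (hB1 : B 0 = 1)
    (hmul : ∀ m n : Fin N → ℕ,
      B m * B n - B (m + n) ∈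
        Submodule.span k {x : A | ∃ p : Fin N → ℕ, RevLex p (m + n) ∧
          (∑ j : Fin N, lam j * (p j : ℤ)) = (∑ j : Fin N, lam j * ((m + n) j : ℤ)) ∧
          x = B p})
    (Ψ : A → (Fin N → ℕ))
    (hΨ : ∀ x : A, x ≠ 0 →
      B.repr x (Ψ x) ≠ 0 ∧ ∀ m : Fin N → ℕ, B.repr x m ≠ 0 → m = Ψ x ∨ RevLex m (Ψ x)) :
    closure (convexHull ℝ (⋃ n : ℕ, ⋃ (_ : 1 ≤ n),
      {y : Fin N → ℝ | ∃ x : A,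
        x ∈ Submodule.span k
          {z : A | ∃ m : Fin N → ℕ, (∑ j : Fin N, lam j * (m j : ℤ)) = (n : ℤ) ∧ z = B m} ∧
        x ≠ 0 ∧ y = (n : ℝ)⁻¹ • fun i : Fin N => (Ψ x i : ℝ)})) =
    convexHull ℝ
      {y : Fin N → ℝ | ∃ j : Fin N, y = ((lam j : ℝ))⁻¹ • (Pi.single j (1 : ℝ) : Fin N → ℝ)} :=
  stmt15_general lam hlam B Ψ hΨ
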